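/- In the Lorentzian warped product X = I ×_f Y of a metric space Y with interval I and continuous f : I → (0,∞), the reverse triangle inequality holds: if (r,x) ≤ (s,y) ≤ (t,z) then τ((r,x),(t,z)) ≥ τ((r,x),(s,y)) + τ((s,y),(t,z)), where τ((s,x),(t,y)) := τ_{I×_f ℝ}((s,0),(t,d(x,y))). -/

import Mathlib

noncomputable section
open Real Set Filter

/-- A future-directed causal curve `s ↦ (α s, β s)` on `[a,b]` in the Lorentzian warped
product comparison space `I ×_f ℝ`, i.e. the spacetime `I × ℝ` with the continuous
metric `-dt² + f(t)² dx²` and time orientation `∂ₜ`. -/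
def IsCausalCurve (I : Set ℝ) (f : ℝ → ℝ) (a b : ℝ) (α β : ℝ → ℝ) : Prop :=
  a < b ∧ (∀ s ∈ Set.Icc a b, α s ∈ I) ∧
    (∀ s ∈ Set.Icc a b, DifferentiableAt ℝ α s ∧ DifferentiableAt ℝ β s) ∧
    (∀ s ∈ Set.Icc a b, 0 < deriv α s ∧ (f (α s)) ^ 2 * (deriv β s) ^ 2 ≤ (deriv α s) ^ 2)

/-- A future-directed timelike curve in `I ×_f ℝ`. -/
def IsTimelikeCurve (I : Set ℝ) (f : ℝ → ℝ) (a b : ℝ) (α β : ℝ → ℝ) : Prop :=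
  IsCausalCurve I f a b α β ∧
    ∀ s ∈ Set.Icc a b, (f (α s)) ^ 2 * (deriv β s) ^ 2 < (deriv α s) ^ 2

/-- The causal relation `≤` of `I ×_f ℝ`: there is a future-directed causal curve
from `p` to `q`, or `p = q`. -/
def causalRel (I : Set ℝ) (f : ℝ → ℝ) (p q : ℝ × ℝ) : Prop :=
  p = q ∨ ∃ a b α β, IsCausalCurve I f a b α β ∧
    α a = p.1 ∧ β a = p.2 ∧ α b = q.1 ∧ β b = q.2

/-- The chronological (timelike) relation `≪` of `I ×_f ℝ`. -/
def chronRel (I : Set ℝ) (f : ℝ → ℝ) (p q : ℝ × ℝ) : Prop :=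
  ∃ a b α β, IsTimelikeCurve I f a b α β ∧
    α a = p.1 ∧ β a = p.2 ∧ α b = q.1 ∧ β b = q.2

/-- The Lorentzian length `∫ √(α'² - f(α)² β'²)` of a causal curve in `I ×_f ℝ`. -/
def lorLength (f : ℝ → ℝ) (a b : ℝ) (α β : ℝ → ℝ) : ℝ :=
  ∫ s in a..b, Real.sqrt ((deriv α s) ^ 2 - (f (α s)) ^ 2 * (deriv β s) ^ 2)

/-- The time separation function of `I ×_f ℝ`: the supremum of Lorentzian lengths of
future-directed causal curves from `p` to `q` (and `0` if there are none). -/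
def timeSep (I : Set ℝ) (f : ℝ → ℝ) (p q : ℝ × ℝ) : ℝ :=
  sSup (insert 0 {L | ∃ a b α β, IsCausalCurve I f a b α β ∧
    α a = p.1 ∧ β a = p.2 ∧ α b = q.1 ∧ β b = q.2 ∧ L = lorLength f a b α β})

/-- The underlying interval `(-π/2, π/2)` of `AdS' = (-π/2,π/2) ×_cos ℝ`. -/
def adsStrip : Set ℝ := Set.Ioo (-(π / 2)) (π / 2)

/-- Causal relation of the Lorentzian warped product `I ×_f Y`:
`(s,x) ≤ (t,y)` iff `(s,0) ≤ (t, d(x,y))` in the comparison space `I ×_f ℝ`. -/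
def wpCausal (I : Set ℝ) (f : ℝ → ℝ) {Y : Type*} [MetricSpace Y] (p q : ℝ × Y) : Prop :=
  causalRel I f (p.1, 0) (q.1, dist p.2 q.2)

/-- Chronological relation of the Lorentzian warped product `I ×_f Y`. -/
def wpChron (I : Set ℝ) (f : ℝ → ℝ) {Y : Type*} [MetricSpace Y] (p q : ℝ × Y) : Prop :=
  chronRel I f (p.1, 0) (q.1, dist p.2 q.2)

/-- Time separation of the Lorentzian warped product `I ×_f Y`:
`τ((s,x),(t,y)) = τ_{I ×_f ℝ}((s,0),(t,d(x,y)))`. -/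
def wpTau (I : Set ℝ) (f : ℝ → ℝ) {Y : Type*} [MetricSpace Y] (p q : ℝ × Y) : ℝ :=
  timeSep I f (p.1, 0) (q.1, dist p.2 q.2)

/-- A future-directed causal curve in the Lorentzian warped product `I ×_f Y`. -/
def IsWpCausalCurve (I : Set ℝ) (f : ℝ → ℝ) {Y : Type*} [MetricSpace Y]
    (γ : ℝ → ℝ × Y) (a b : ℝ) : Prop :=
  a < b ∧ ContinuousOn γ (Set.Icc a b) ∧ (∀ s ∈ Set.Icc a b, (γ s).1 ∈ I) ∧
    ∀ u ∈ Set.Icc a b, ∀ v ∈ Set.Icc a b, u < v → wpCausal I f (γ u) (γ v) ∧ γ u ≠ γ v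


/-!
Reparametrized by its time coordinate, a causal curve of `I ×_f ℝ` is described by its slope
`w ∈ [-1, 1]` relative to the light cone: its displacement is `∫ w / f` and its length is
`∫ √(1 - w²)`. The two curves given by the hypotheses concatenate to one slope on `[r, t]`
whose displacement `d(x, y) + d(y, z)` is at least `d(x, z)`. This measurable slope is
approximated in `L¹` by continuous ones, mixed with the null slope `1` to recover the
displacement lost in the approximation. The graph of a continuous slope is a causal curve, and
scaling its displacement down to `d(x, z)` only increases its length.
-/

open MeasureTheory

namespace IsCausalCurve

variable {I : Set ℝ} {f : ℝ → ℝ} {a b : ℝ} {α β : ℝ → ℝ}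

lemma hasDerivAt_fst (h : IsCausalCurve I f a b α β) {s : ℝ} (hs : s ∈ Icc a b) :
    HasDerivAt α (deriv α s) s :=
  (h.2.2.1 s hs).1.hasDerivAt

lemma hasDerivAt_snd (h : IsCausalCurve I f a b α β) {s : ℝ} (hs : s ∈ Icc a b) :
    HasDerivAt β (deriv β s) s :=
  (h.2.2.1 s hs).2.hasDerivAt

lemma continuousOn_fst (h : IsCausalCurve I f a b α β) : ContinuousOn α (Icc a b) :=
  fun _ hs ↦ (h.hasDerivAt_fst hs).continuousAt.continuousWithinAt

lemma deriv_fst_pos (h : IsCausalCurve I f a b α β) {s : ℝ} (hs : s ∈ Icc a b) :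
    0 < deriv α s :=
  (h.2.2.2 s hs).1

lemma strictMonoOn (h : IsCausalCurve I f a b α β) : StrictMonoOn α (Icc a b) :=
  strictMonoOn_of_deriv_pos (convex_Icc a b) h.continuousOn_fst fun _ hs ↦
    h.deriv_fst_pos (interior_subset hs)

lemma fst_lt_fst (h : IsCausalCurve I f a b α β) : α a < α b :=
  h.strictMonoOn (left_mem_Icc.2 h.1.le) (right_mem_Icc.2 h.1.le) h.1

lemma image_Icc (h : IsCausalCurve I f a b α β) : α '' Icc a b = Icc (α a) (α b) :=
  h.continuousOn_fst.image_Icc_of_monotoneOn h.1.le h.strictMonoOn.monotoneOn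

lemma Icc_subset (h : IsCausalCurve I f a b α β) : Icc (α a) (α b) ⊆ I := by
  rw [← h.image_Icc]
  rintro _ ⟨s, hs, rfl⟩
  exact h.2.1 s hs

lemma intervalIntegrable_deriv_fst (h : IsCausalCurve I f a b α β) :
    IntervalIntegrable (deriv α) volume a b :=
  (intervalIntegrable_iff_integrableOn_Ioc_of_le h.1.le).2 <|
    intervalIntegral.integrableOn_deriv_of_nonneg h.continuousOn_fst
      (fun _ hs ↦ h.hasDerivAt_fst (Ioo_subset_Icc_self hs))
      (fun _ hs ↦ (h.deriv_fst_pos (Ioo_subset_Icc_self hs)).le)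

lemma lorLength_le (h : IsCausalCurve I f a b α β) : lorLength f a b α β ≤ α b - α a := by
  have hint := h.intervalIntegrable_deriv_fst
  rw [← intervalIntegral.integral_eq_sub_of_hasDerivAt
      (fun s hs ↦ h.hasDerivAt_fst (uIcc_of_le h.1.le ▸ hs)) hint, lorLength,
    intervalIntegral.integral_of_le h.1.le, intervalIntegral.integral_of_le h.1.le]
  refine integral_mono_of_nonneg (ae_of_all _ fun _ ↦ Real.sqrt_nonneg _)
    ((intervalIntegrable_iff_integrableOn_Ioc_of_le h.1.le).1 hint)
    ((ae_restrict_iff' measurableSet_Ioc).2 (ae_of_all _ fun s hs ↦ ?_))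
  calc √(deriv α s ^ 2 - f (α s) ^ 2 * deriv β s ^ 2) ≤ √(deriv α s ^ 2) :=
        Real.sqrt_le_sqrt (sub_le_self _ (by positivity))
    _ = deriv α s := Real.sqrt_sq (h.deriv_fst_pos (Ioc_subset_Icc_self hs)).le

lemma abs_mul_deriv_snd_le (h : IsCausalCurve I f a b α β) {s : ℝ} (hs : s ∈ Icc a b) :
    |f (α s) * deriv β s| ≤ deriv α s :=
  abs_le_of_sq_le_sq (mul_pow (f (α s)) (deriv β s) 2 ▸ (h.2.2.2 s hs).2)
    (h.deriv_fst_pos hs).le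

lemma integral_comp (h : IsCausalCurve I f a b α β) (g : ℝ → ℝ) :
    ∫ u in α a..α b, g u = ∫ s in a..b, deriv α s * g (α s) := by
  have hab : Ioo (min a b) (max a b) = Ioo a b := by rw [min_eq_left h.1.le, max_eq_right h.1.le]
  refine (intervalIntegral.integral_deriv_smul_comp_of_deriv_nonneg
    (uIcc_of_le h.1.le ▸ h.continuousOn_fst) (fun s hs ↦ ?_) (fun s hs ↦ ?_)).symm
  · exact h.hasDerivAt_fst (Ioo_subset_Icc_self (hab ▸ hs))
  · exact (h.deriv_fst_pos (Ioo_subset_Icc_self (hab ▸ hs))).le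

lemma intervalIntegrable_comp_iff (h : IsCausalCurve I f a b α β) (g : ℝ → ℝ) :
    IntervalIntegrable g volume (α a) (α b) ↔
      IntervalIntegrable (fun s ↦ deriv α s * g (α s)) volume a b := by
  rw [intervalIntegrable_iff_integrableOn_Icc_of_le h.fst_lt_fst.le,
    intervalIntegrable_iff_integrableOn_Icc_of_le h.1.le]
  exact (integrableOn_Icc_deriv_smul_iff_of_deriv_nonneg h.continuousOn_fst
    (fun s hs ↦ h.hasDerivAt_fst (Ioo_subset_Icc_self hs))
    (fun s hs ↦ (h.deriv_fst_pos (Ioo_subset_Icc_self hs)).le) h.1.le).symm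

lemma intervalIntegrable_mul_deriv_snd (hf : ContinuousOn f I) (h : IsCausalCurve I f a b α β) :
    IntervalIntegrable (fun s ↦ f (α s) * deriv β s) volume a b := by
  refine h.intervalIntegrable_deriv_fst.mono_fun ?_ ?_
  · rw [uIoc_of_le h.1.le]
    exact (((hf.comp h.continuousOn_fst h.2.1).aestronglyMeasurable measurableSet_Icc).mono_set
      Ioc_subset_Icc_self).mul (measurable_deriv β).aestronglyMeasurable
  · rw [uIoc_of_le h.1.le]
    refine (ae_restrict_iff' measurableSet_Ioc).2 (ae_of_all _ fun s hs ↦ ?_)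
    simpa [abs_of_pos (h.deriv_fst_pos (Ioc_subset_Icc_self hs))] using
      h.abs_mul_deriv_snd_le (Ioc_subset_Icc_self hs)

lemma intervalIntegrable_deriv_snd (hf : ContinuousOn f I) (hfpos : ∀ t ∈ I, 0 < f t)
    (h : IsCausalCurve I f a b α β) : IntervalIntegrable (deriv β) volume a b := by
  have hinv : ContinuousOn (fun s ↦ (f (α s))⁻¹) (uIcc a b) := by
    rw [uIcc_of_le h.1.le]
    exact (hf.comp h.continuousOn_fst h.2.1).inv₀ fun s hs ↦ (hfpos _ (h.2.1 s hs)).ne'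
  refine ((h.intervalIntegrable_mul_deriv_snd hf).continuousOn_mul hinv).congr fun s hs ↦ ?_
  have := (hfpos _ (h.2.1 s (uIoc_subset_uIcc.trans (uIcc_of_le h.1.le).subset hs))).ne'
  field_simp

lemma exists_slope (hf : ContinuousOn f I) (hfpos : ∀ t ∈ I, 0 < f t)
    (h : IsCausalCurve I f a b α β) :
    ∃ w : ℝ → ℝ, IntervalIntegrable w volume (α a) (α b) ∧
      (∀ u ∈ Icc (α a) (α b), |w u| ≤ 1) ∧
      ∫ u in α a..α b, w u / f u = β b - β a ∧
      lorLength f a b α β = ∫ u in α a..α b, √(1 - w u ^ 2) := by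
  set w := fun u ↦ f u * deriv β (Function.invFunOn α (Icc a b) u) /
    deriv α (Function.invFunOn α (Icc a b) u)
  have hwα : ∀ s ∈ Icc a b, w (α s) = f (α s) * deriv β s / deriv α s := fun s hs ↦ by
    simp only [w, h.strictMonoOn.injOn.leftInvOn_invFunOn hs]
  have hα' : ∀ s ∈ Icc a b, deriv α s ≠ 0 := fun s hs ↦ (h.deriv_fst_pos hs).ne'
  have hfα : ∀ s ∈ Icc a b, f (α s) ≠ 0 := fun s hs ↦ (hfpos _ (h.2.1 s hs)).ne'
  refine ⟨w, ?_, ?_, ?_, ?_⟩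
  · refine (h.intervalIntegrable_comp_iff w).2 <| (h.intervalIntegrable_mul_deriv_snd hf).congr
      fun s hs ↦ ?_
    have hs' := (uIoc_subset_uIcc.trans (uIcc_of_le h.1.le).subset) hs
    simp only [hwα s hs']
    field_simp [hα' s hs']
  · rw [← h.image_Icc]
    rintro _ ⟨s, hs, rfl⟩
    rw [hwα s hs, abs_div, abs_of_pos (h.deriv_fst_pos hs)]
    exact div_le_one_of_le₀ (h.abs_mul_deriv_snd_le hs) (h.deriv_fst_pos hs).le
  · rw [h.integral_comp, ← intervalIntegral.integral_eq_sub_of_hasDerivAt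
      (fun s hs ↦ h.hasDerivAt_snd (uIcc_of_le h.1.le ▸ hs))
      (h.intervalIntegrable_deriv_snd hf hfpos)]
    refine intervalIntegral.integral_congr fun s hs ↦ ?_
    rw [uIcc_of_le h.1.le] at hs
    simp only [hwα s hs]
    field_simp [hα' s hs, hfα s hs]
  · rw [h.integral_comp, lorLength]
    refine intervalIntegral.integral_congr fun s hs ↦ ?_
    rw [uIcc_of_le h.1.le] at hs
    calc _ = √(deriv α s ^ 2 * (1 - (f (α s) * deriv β s / deriv α s) ^ 2)) := by
          congr 1
          field_simp [hα' s hs]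
      _ = _ := by
          rw [Real.sqrt_mul (sq_nonneg _), Real.sqrt_sq (h.deriv_fst_pos hs).le, hwα s hs]

end IsCausalCurve

section TimeSep

variable {I : Set ℝ} {f : ℝ → ℝ}

def causalLengths (I : Set ℝ) (f : ℝ → ℝ) (p q : ℝ × ℝ) : Set ℝ :=
  {L | ∃ a b α β, IsCausalCurve I f a b α β ∧
    α a = p.1 ∧ β a = p.2 ∧ α b = q.1 ∧ β b = q.2 ∧ L = lorLength f a b α β}

lemma timeSep_eq_sSup_insert (p q : ℝ × ℝ) :
    timeSep I f p q = sSup (insert 0 (causalLengths I f p q)) :=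
  rfl

lemma lorLength_mem_causalLengths {a b : ℝ} {α β : ℝ → ℝ} (h : IsCausalCurve I f a b α β) :
    lorLength f a b α β ∈ causalLengths I f (α a, β a) (α b, β b) :=
  ⟨a, b, α, β, h, rfl, rfl, rfl, rfl, rfl⟩

lemma nonneg_of_mem_causalLengths {p q : ℝ × ℝ} {L : ℝ} (hL : L ∈ causalLengths I f p q) :
    0 ≤ L := by
  obtain ⟨a, b, α, β, h, -, -, -, -, rfl⟩ := hL
  exact intervalIntegral.integral_nonneg h.1.le fun _ _ ↦ Real.sqrt_nonneg _

lemma le_of_mem_causalLengths {p q : ℝ × ℝ} {L : ℝ} (hL : L ∈ causalLengths I f p q) :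
    L ≤ q.1 - p.1 := by
  obtain ⟨a, b, α, β, h, ha, -, hb, -, rfl⟩ := hL
  exact ha ▸ hb ▸ h.lorLength_le

lemma bddAbove_insert_causalLengths (p q : ℝ × ℝ) :
    BddAbove (insert 0 (causalLengths I f p q)) :=
  bddAbove_insert.2 ⟨q.1 - p.1, fun _ ↦ le_of_mem_causalLengths⟩

lemma le_timeSep_of_mem {p q : ℝ × ℝ} {L : ℝ} (hL : L ∈ causalLengths I f p q) :
    L ≤ timeSep I f p q :=
  le_csSup (bddAbove_insert_causalLengths p q) (mem_insert_of_mem 0 hL)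

lemma timeSep_of_le {p q : ℝ × ℝ} (h : q.1 ≤ p.1) : timeSep I f p q = 0 := by
  have : causalLengths I f p q = ∅ := by
    refine eq_empty_of_forall_notMem fun L ⟨a, b, α, β, hc, ha, _, hb, _, _⟩ ↦ ?_
    exact h.not_gt (ha ▸ hb ▸ hc.fst_lt_fst)
  rw [timeSep_eq_sSup_insert, this, insert_empty_eq, csSup_singleton]

lemma timeSep_eq_sSup {p q : ℝ × ℝ} (hne : (causalLengths I f p q).Nonempty) :
    timeSep I f p q = sSup (causalLengths I f p q) := by
  have hbdd : BddAbove (causalLengths I f p q) := ⟨q.1 - p.1, fun _ ↦ le_of_mem_causalLengths⟩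
  obtain ⟨L, hL⟩ := hne
  rw [timeSep_eq_sSup_insert, csSup_insert hbdd ⟨L, hL⟩,
    sup_eq_right.2 ((nonneg_of_mem_causalLengths hL).trans (le_csSup hbdd hL))]

lemma timeSep_add_timeSep_le {p₁ q₁ p₂ q₂ : ℝ × ℝ} {C : ℝ}
    (hne₁ : (causalLengths I f p₁ q₁).Nonempty) (hne₂ : (causalLengths I f p₂ q₂).Nonempty)
    (h : ∀ L₁ ∈ causalLengths I f p₁ q₁, ∀ L₂ ∈ causalLengths I f p₂ q₂, L₁ + L₂ ≤ C) :
    timeSep I f p₁ q₁ + timeSep I f p₂ q₂ ≤ C := by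
  rw [timeSep_eq_sSup hne₁, timeSep_eq_sSup hne₂, ← le_sub_iff_add_le]
  exact csSup_le hne₁ fun L₁ hL₁ ↦ le_sub_comm.1 <|
    csSup_le hne₂ fun L₂ hL₂ ↦ le_sub_iff_add_le'.2 (h L₁ hL₁ L₂ hL₂)

end TimeSep

section Graph

variable {I : Set ℝ} {f g : ℝ → ℝ} {p q : ℝ}

lemma isCausalCurve_graph (hg : Continuous g) (hpq : p < q) (hI : Icc p q ⊆ I)
    (hfg : ∀ u ∈ Icc p q, f u ^ 2 * g u ^ 2 ≤ 1) :
    IsCausalCurve I f p q id (fun u ↦ ∫ v in p..u, g v) := by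
  refine ⟨hpq, hI, fun u _ ↦ ⟨differentiableAt_id,
    (hg.integral_hasStrictDerivAt p u).hasDerivAt.differentiableAt⟩, fun u hu ↦ ?_⟩
  simpa [Continuous.deriv_integral g hg] using hfg u hu

lemma lorLength_graph (hg : Continuous g) :
    lorLength f p q id (fun u ↦ ∫ v in p..u, g v) = ∫ u in p..q, √(1 - f u ^ 2 * g u ^ 2) := by
  simp [lorLength, Continuous.deriv_integral g hg]

lemma integral_sqrt_le_timeSep_of_continuous (hf : ContinuousOn f (Icc p q)) (hg : Continuous g)
    (hpq : p < q) (hI : Icc p q ⊆ I) (hfg : ∀ u ∈ Icc p q, f u ^ 2 * g u ^ 2 ≤ 1) {d : ℝ}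
    (hd : 0 ≤ d) (hdg : d ≤ ∫ u in p..q, g u) :
    ∫ u in p..q, √(1 - f u ^ 2 * g u ^ 2) ≤ timeSep I f (p, 0) (q, d) := by
  -- scaling the slope by `κ ∈ [0, 1]` brings the displacement down to `d` and only lengthens
  set κ := d / ∫ u in p..q, g u
  have hκ₀ : 0 ≤ κ := div_nonneg hd (hd.trans hdg)
  have hκ₁ : κ ≤ 1 := div_le_one_of_le₀ hdg (hd.trans hdg)
  have hκg : Continuous fun u ↦ κ * g u := continuous_const.mul hg
  have hscale : ∀ u, f u ^ 2 * (κ * g u) ^ 2 ≤ f u ^ 2 * g u ^ 2 := fun u ↦ by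
    rw [mul_pow]
    exact mul_le_mul_of_nonneg_left
      (mul_le_of_le_one_left (sq_nonneg _) (pow_le_one₀ hκ₀ hκ₁)) (sq_nonneg _)
  have hcurve := isCausalCurve_graph hκg hpq hI fun u hu ↦ (hscale u).trans (hfg u hu)
  have hend : ∫ u in p..q, κ * g u = d := by
    rw [intervalIntegral.integral_const_mul]
    exact div_mul_cancel_of_imp fun h ↦ le_antisymm (h ▸ hdg) hd
  have hmem := lorLength_mem_causalLengths hcurve
  simp only [id, intervalIntegral.integral_same, hend, lorLength_graph hκg] at hmem
  refine le_trans ?_ (le_timeSep_of_mem hmem)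
  refine intervalIntegral.integral_mono_on hpq.le ?_ ?_ fun u _ ↦
    Real.sqrt_le_sqrt (by linarith [hscale u])
  all_goals
    refine ContinuousOn.intervalIntegrable ?_
    rw [uIcc_of_le hpq.le]
    fun_prop

section Pointwise

lemma sqrt_one_sub_sq_le_sqrt_one_sub_sq_add {x y k : ℝ} (hx : |x| ≤ 1) (hy : |y| ≤ 1)
    (hk : 0 < k) : √(1 - y ^ 2) ≤ √(1 - x ^ 2) + (k / 2 + |x - y| / k) := by
  set A := √(1 - y ^ 2)
  set B := √(1 - x ^ 2)
  rcases le_or_gt A B with hAB | hAB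
  · linarith [show 0 ≤ k / 2 + |x - y| / k by positivity]
  have hA : A ^ 2 = 1 - y ^ 2 := Real.sq_sqrt (by nlinarith [sq_abs y, abs_nonneg y])
  have hB : B ^ 2 = 1 - x ^ 2 := Real.sq_sqrt (by nlinarith [sq_abs x, abs_nonneg x])
  have hsq : x ^ 2 - y ^ 2 ≤ 2 * |x - y| := by
    calc x ^ 2 - y ^ 2 = (x - y) * (x + y) := by ring
      _ ≤ |x - y| * |x + y| := abs_mul (x - y) (x + y) ▸ le_abs_self _
      _ ≤ |x - y| * 2 := by
        gcongr
        exact (abs_add_le x y).trans (by linarith)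
      _ = 2 * |x - y| := mul_comm _ _
  have hamgm : 2 * |x - y| ≤ (k / 2 + |x - y| / k) ^ 2 := by
    have : k / 2 * (|x - y| / k) = |x - y| / 2 := by field_simp
    nlinarith [sq_nonneg (k / 2 - |x - y| / k)]
  have hBnn : 0 ≤ B := Real.sqrt_nonneg _
  nlinarith [show 0 ≤ k / 2 + |x - y| / k by positivity]

lemma mul_sqrt_one_sub_sq_le {x θ : ℝ} (hx : |x| ≤ 1) (hθ₀ : 0 ≤ θ) (hθ₁ : θ ≤ 1) :
    (1 - θ) * √(1 - x ^ 2) ≤ √(1 - ((1 - θ) * x + θ) ^ 2) := by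
  have hx' := abs_le.1 hx
  have hθ : 0 ≤ θ * (1 - θ) * (1 - x) := by
    have := sub_nonneg.2 hθ₁
    have := sub_nonneg.2 hx'.2
    positivity
  calc (1 - θ) * √(1 - x ^ 2) = √((1 - θ) ^ 2 * (1 - x ^ 2)) := by
        rw [Real.sqrt_mul (sq_nonneg _), Real.sqrt_sq (sub_nonneg.2 hθ₁)]
    _ ≤ √(1 - ((1 - θ) * x + θ) ^ 2) := Real.sqrt_le_sqrt (by nlinarith)

lemma sqrt_one_sub_sq_le_of_mix {v w θ k : ℝ} (hv : |v| ≤ 1) (hw : |w| ≤ 1) (hθ₀ : 0 ≤ θ)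
    (hθ₁ : θ ≤ 1) (hk : 0 < k) :
    √(1 - w ^ 2) ≤ √(1 - ((1 - θ) * v + θ) ^ 2) + (θ + k / 2 + |v - w| / k) := by
  have h₁ := sqrt_one_sub_sq_le_sqrt_one_sub_sq_add hv hw hk
  have h₂ := mul_sqrt_one_sub_sq_le hv hθ₀ hθ₁
  have h₃ : √(1 - v ^ 2) ≤ 1 := Real.sqrt_le_one.2 (by nlinarith [sq_nonneg v])
  nlinarith

lemma abs_mix_le_one {v θ : ℝ} (hv : |v| ≤ 1) (hθ₀ : 0 ≤ θ) (hθ₁ : θ ≤ 1) :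
    |(1 - θ) * v + θ| ≤ 1 := by
  have := abs_le.1 hv
  rw [abs_le]
  constructor <;> nlinarith

lemma abs_clamp_sub_le {x y : ℝ} (hy : |y| ≤ 1) : |max (-1) (min 1 x) - y| ≤ |x - y| := by
  have := abs_le.1 hy
  rcases le_total x (-1) with h | h
  · rw [min_eq_right (by linarith), max_eq_left h, abs_of_nonpos (by linarith),
      abs_of_nonpos (by linarith)]
    linarith
  rcases le_total x 1 with h' | h'
  · rw [min_eq_right h', max_eq_right h]
  · rw [min_eq_left h', max_eq_right (by norm_num), abs_of_nonneg (by linarith),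
      abs_of_nonneg (by linarith)]
    linarith

end Pointwise

section Approximation

variable {c v w : ℝ → ℝ} {p q : ℝ}

lemma IntervalIntegrable.sqrt_one_sub_sq (hw : IntervalIntegrable w volume p q) :
    IntervalIntegrable (fun u ↦ √(1 - w u ^ 2)) volume p q := by
  refine intervalIntegrable_const (c := (1 : ℝ)).mono_fun ?_ (ae_of_all _ fun u ↦ ?_)
  · have hsq : Continuous fun x : ℝ ↦ √(1 - x ^ 2) := by fun_prop
    exact hsq.comp_aestronglyMeasurable (intervalIntegrable_iff.1 hw).aestronglyMeasurable
  · simpa [abs_of_nonneg (Real.sqrt_nonneg _)] using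
      Real.sqrt_le_one.2 (sub_le_self _ (sq_nonneg (w u)))

lemma exists_continuous_integral_abs_sub_le (hpq : p ≤ q) (hw : IntervalIntegrable w volume p q)
    (hw₁ : ∀ u ∈ Icc p q, |w u| ≤ 1) {η : ℝ} (hη : 0 < η) :
    ∃ v : ℝ → ℝ, Continuous v ∧ (∀ u, |v u| ≤ 1) ∧ ∫ u in p..q, |v u - w u| ≤ η := by
  have hF : Integrable ((Ioc p q).indicator w) :=
    ((intervalIntegrable_iff_integrableOn_Ioc_of_le hpq).1 hw).integrable_indicator
      measurableSet_Ioc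
  obtain ⟨g, -, hgw, hg, hgi⟩ := hF.exists_hasCompactSupport_integral_sub_le hη
  refine ⟨fun u ↦ max (-1) (min 1 (g u)), by fun_prop, fun u ↦ abs_le.2 ⟨le_max_left _ _,
    max_le (by norm_num) (min_le_left _ _)⟩, ?_⟩
  have hgw' : IntervalIntegrable (fun u ↦ |g u - w u|) volume p q :=
    ((hg.intervalIntegrable p q).sub hw).abs
  calc ∫ u in p..q, |max (-1) (min 1 (g u)) - w u|
      ≤ ∫ u in p..q, |g u - w u| :=
        intervalIntegral.integral_mono_on hpq ((Continuous.intervalIntegrable (by fun_prop) p q).sub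
          hw).abs hgw' fun u hu ↦ abs_clamp_sub_le (hw₁ u hu)
    _ = ∫ u in Ioc p q, ‖(Ioc p q).indicator w u - g u‖ := by
        rw [intervalIntegral.integral_of_le hpq]
        refine setIntegral_congr_fun measurableSet_Ioc fun u hu ↦ ?_
        rw [indicator_of_mem hu, Real.norm_eq_abs, abs_sub_comm]
    _ ≤ ∫ u, ‖(Ioc p q).indicator w u - g u‖ :=
        setIntegral_le_integral (hF.sub hgi).norm (ae_of_all _ fun _ ↦ norm_nonneg _)
    _ ≤ η := hgw

lemma integral_sqrt_le_of_mix (hpq : p ≤ q) (hv : Continuous v) (hv₁ : ∀ u, |v u| ≤ 1)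
    (hw : IntervalIntegrable w volume p q) (hw₁ : ∀ u ∈ Icc p q, |w u| ≤ 1) {θ k : ℝ}
    (hθ₀ : 0 ≤ θ) (hθ₁ : θ ≤ 1) (hk : 0 < k) :
    ∫ u in p..q, √(1 - w u ^ 2) ≤ (∫ u in p..q, √(1 - ((1 - θ) * v u + θ) ^ 2)) +
      ((θ + k / 2) * (q - p) + (∫ u in p..q, |v u - w u|) / k) := by
  have hvw : IntervalIntegrable (fun u ↦ |v u - w u| / k) volume p q :=
    ((hv.intervalIntegrable p q).sub hw).abs.div_const k
  have hmix : IntervalIntegrable (fun u ↦ √(1 - ((1 - θ) * v u + θ) ^ 2)) volume p q :=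
    Continuous.intervalIntegrable (by fun_prop) p q
  calc ∫ u in p..q, √(1 - w u ^ 2)
      ≤ ∫ u in p..q, (√(1 - ((1 - θ) * v u + θ) ^ 2) + (θ + k / 2 + |v u - w u| / k)) :=
        intervalIntegral.integral_mono_on hpq hw.sqrt_one_sub_sq
          (hmix.add (intervalIntegrable_const.add hvw)) fun u hu ↦
          sqrt_one_sub_sq_le_of_mix (hv₁ u) (hw₁ u hu) hθ₀ hθ₁ hk
    _ = _ := by
      rw [intervalIntegral.integral_add hmix (intervalIntegrable_const.add hvw),
        intervalIntegral.integral_add intervalIntegrable_const hvw,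
        intervalIntegral.integral_const, intervalIntegral.integral_div, smul_eq_mul]
      ring

lemma le_integral_mul_mix (hc : Continuous c) (hpq : p ≤ q) {M : ℝ}
    (hM : ∀ u ∈ Icc p q, |c u| ≤ M) (hv : Continuous v) (hw : IntervalIntegrable w volume p q)
    {θ : ℝ} (hθ₁ : θ ≤ 1) :
    (∫ u in p..q, c u * w u) + θ * (∫ u in p..q, c u * (1 - w u)) -
        (1 - θ) * (M * ∫ u in p..q, |v u - w u|) ≤
      ∫ u in p..q, c u * ((1 - θ) * v u + θ) := by
  have hvw := (hv.intervalIntegrable p q).sub hw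
  have hcw := hw.continuousOn_mul hc.continuousOn
  have hc1w := ((intervalIntegrable_const (c := (1 : ℝ))).sub hw).continuousOn_mul hc.continuousOn
  have hcvw := hvw.continuousOn_mul hc.continuousOn
  have hsplit : ∫ u in p..q, c u * ((1 - θ) * v u + θ) = (∫ u in p..q, c u * w u) +
      θ * (∫ u in p..q, c u * (1 - w u)) + (1 - θ) * ∫ u in p..q, c u * (v u - w u) := by
    rw [← intervalIntegral.integral_const_mul, ← intervalIntegral.integral_const_mul,
      ← intervalIntegral.integral_add hcw (hc1w.const_mul θ),
      ← intervalIntegral.integral_add (hcw.add (hc1w.const_mul θ)) (hcvw.const_mul _)]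
    exact intervalIntegral.integral_congr fun u _ ↦ by ring
  have hlow : -(M * ∫ u in p..q, |v u - w u|) ≤ ∫ u in p..q, c u * (v u - w u) := by
    rw [← intervalIntegral.integral_const_mul, ← intervalIntegral.integral_neg]
    refine intervalIntegral.integral_mono_on hpq (hvw.abs.const_mul M).neg hcvw fun u hu ↦ ?_
    refine neg_le_of_abs_le ?_
    rw [abs_mul]
    exact mul_le_mul_of_nonneg_right (hM u hu) (abs_nonneg _)
  nlinarith [mul_le_mul_of_nonneg_left hlow (sub_nonneg.2 hθ₁)]

lemma integral_sqrt_one_sub_sq_eq_zero (hc : Continuous c) (hpq : p ≤ q)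
    (hcpos : ∀ u ∈ Icc p q, 0 < c u) (hw : IntervalIntegrable w volume p q)
    (hw₁ : ∀ u ∈ Icc p q, |w u| ≤ 1) (h : ∫ u in p..q, c u * (1 - w u) = 0) :
    ∫ u in p..q, √(1 - w u ^ 2) = 0 := by
  have hnn : 0 ≤ᵐ[volume.restrict (Ioc p q)] fun u ↦ c u * (1 - w u) :=
    (ae_restrict_iff' measurableSet_Ioc).2 <| ae_of_all _ fun u hu ↦
      mul_nonneg (hcpos u (Ioc_subset_Icc_self hu)).le
        (sub_nonneg.2 (abs_le.1 (hw₁ u (Ioc_subset_Icc_self hu))).2)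
  have hzero := (intervalIntegral.integral_eq_zero_iff_of_le_of_nonneg_ae hpq hnn
    (((intervalIntegrable_const (c := (1 : ℝ))).sub hw).continuousOn_mul hc.continuousOn)).1 h
  rw [intervalIntegral.integral_of_le hpq]
  refine integral_eq_zero_of_ae ?_
  filter_upwards [hzero, ae_restrict_mem measurableSet_Ioc] with u hu hmem
  have hw1 : w u = 1 := by
    rcases mul_eq_zero.1 hu with h | h
    · exact absurd h (hcpos u (Ioc_subset_Icc_self hmem)).ne'
    · linarith
  simp [hw1]

lemma exists_continuous_slope_approx (hc : Continuous c) (hpq : p ≤ q)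
    (hcpos : ∀ u ∈ Icc p q, 0 < c u) (hw : IntervalIntegrable w volume p q)
    (hw₁ : ∀ u ∈ Icc p q, |w u| ≤ 1) {ε : ℝ} (hε : 0 < ε) :
    ∃ v : ℝ → ℝ, Continuous v ∧ (∀ u, |v u| ≤ 1) ∧
      ∫ u in p..q, c u * w u ≤ ∫ u in p..q, c u * v u ∧
      ∫ u in p..q, √(1 - w u ^ 2) ≤ (∫ u in p..q, √(1 - v u ^ 2)) + ε := by
  set σ := ∫ u in p..q, c u * (1 - w u) with hσ_def
  have hσ : 0 ≤ σ := intervalIntegral.integral_nonneg hpq fun u hu ↦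
    mul_nonneg (hcpos u hu).le (sub_nonneg.2 (abs_le.1 (hw₁ u hu)).2)
  -- with no slack `σ`, `w = 1` almost everywhere and `w` has length `0`
  rcases hσ.eq_or_lt with hσ | hσ
  · refine ⟨fun _ ↦ 1, continuous_const, by simp, ?_, ?_⟩
    · refine intervalIntegral.integral_mono_on hpq (hw.continuousOn_mul hc.continuousOn)
        (hc.intervalIntegrable p q |>.mul_const 1) fun u hu ↦ ?_
      exact mul_le_mul_of_nonneg_left (abs_le.1 (hw₁ u hu)).2 (hcpos u hu).le
    · rw [integral_sqrt_one_sub_sq_eq_zero hc hpq hcpos hw hw₁ hσ.symm]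
      simpa using hε.le
  obtain ⟨M, hM⟩ := isCompact_Icc.exists_bound_of_continuousOn hc.continuousOn
  have hM₀ : 0 ≤ M := (norm_nonneg _).trans (hM p (left_mem_Icc.2 hpq))
  -- mixing weight `δ` of the maximal slope `1`, which recovers the displacement lost in an
  -- `L¹`-approximation within `η ≤ δ σ / (M + 1)`; `δ` also serves as the AM-GM parameter
  set δ := min 1 (ε / (2 * (q - p + 1)))
  have hδ₀ : 0 < δ := lt_min one_pos (by have := sub_nonneg.2 hpq; positivity)
  have hδ₁ : δ ≤ 1 := min_le_left _ _
  have hδε : δ * (2 * (q - p + 1)) ≤ ε :=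
    (le_div_iff₀ (by linarith)).1 (min_le_right _ _)
  set η := min (δ * σ / (M + 1)) (δ ^ 2 / 2)
  have hη₀ : 0 < η := lt_min (by positivity) (by positivity)
  obtain ⟨v, hv, hv₁, hvw⟩ := exists_continuous_integral_abs_sub_le hpq hw hw₁ hη₀
  have hE₀ : 0 ≤ ∫ u in p..q, |v u - w u| :=
    intervalIntegral.integral_nonneg hpq fun _ _ ↦ abs_nonneg _
  refine ⟨fun u ↦ (1 - δ) * v u + δ, by fun_prop, fun u ↦ abs_mix_le_one (hv₁ u) hδ₀.le hδ₁,
    ?_, ?_⟩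
  · have hdisp := le_integral_mul_mix hc hpq (fun u hu ↦ by simpa using hM u hu) hv hw hδ₁
    have hME : M * ∫ u in p..q, |v u - w u| ≤ δ * σ :=
      calc M * ∫ u in p..q, |v u - w u| ≤ (M + 1) * η := by
            nlinarith [hvw, min_le_left (δ * σ / (M + 1)) (δ ^ 2 / 2)]
        _ ≤ δ * σ := (le_div_iff₀' (by linarith)).1 (min_le_left _ _)
    rw [← hσ_def] at hdisp
    have := mul_le_of_le_one_left (mul_nonneg hM₀ hE₀) (sub_le_self 1 hδ₀.le)
    linarith
  · have hlen := integral_sqrt_le_of_mix hpq hv hv₁ hw hw₁ hδ₀.le hδ₁ hδ₀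
    have hEδ : (∫ u in p..q, |v u - w u|) / δ ≤ δ / 2 := by
      rw [div_le_iff₀ hδ₀]
      nlinarith [hvw, min_le_right (δ * σ / (M + 1)) (δ ^ 2 / 2)]
    beta_reduce
    nlinarith

end Approximation

section Piecewise

variable {g₁ g₂ : ℝ → ℝ} {r s t : ℝ}

lemma eqOn_ite_le_left (hrs : r ≤ s) :
    EqOn g₁ (fun u ↦ if u ≤ s then g₁ u else g₂ u) (uIoc r s) :=
  fun _ hu ↦ (if_pos (uIoc_of_le hrs ▸ hu).2).symm

lemma eqOn_ite_le_right (hst : s ≤ t) :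
    EqOn g₂ (fun u ↦ if u ≤ s then g₁ u else g₂ u) (uIoc s t) :=
  fun _ hu ↦ (if_neg (uIoc_of_le hst ▸ hu).1.not_ge).symm

lemma IntervalIntegrable.ite_le (hrs : r ≤ s) (hst : s ≤ t)
    (h₁ : IntervalIntegrable g₁ volume r s) (h₂ : IntervalIntegrable g₂ volume s t) :
    IntervalIntegrable (fun u ↦ if u ≤ s then g₁ u else g₂ u) volume r t :=
  (h₁.congr (eqOn_ite_le_left hrs)).trans (h₂.congr (eqOn_ite_le_right hst))

lemma integral_ite_le (hrs : r ≤ s) (hst : s ≤ t)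
    (h₁ : IntervalIntegrable g₁ volume r s) (h₂ : IntervalIntegrable g₂ volume s t) :
    ∫ u in r..t, (if u ≤ s then g₁ u else g₂ u) = (∫ u in r..s, g₁ u) + ∫ u in s..t, g₂ u := by
  rw [← intervalIntegral.integral_add_adjacent_intervals (h₁.congr (eqOn_ite_le_left hrs))
    (h₂.congr (eqOn_ite_le_right hst))]
  congr 1 <;> refine intervalIntegral.integral_congr_ae (ae_of_all _ fun u hu ↦ ?_)
  exacts [(eqOn_ite_le_left hrs hu).symm, (eqOn_ite_le_right hst hu).symm]

end Piecewise

section Concatenation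

variable {I : Set ℝ} {f : ℝ → ℝ}

lemma IntervalIntegrable.div_of_Icc_subset (hf : ContinuousOn f I) (hfpos : ∀ t ∈ I, 0 < f t)
    {w : ℝ → ℝ} {p q : ℝ} (hpq : p ≤ q) (hI : Icc p q ⊆ I) (hw : IntervalIntegrable w volume p q) :
    IntervalIntegrable (fun u ↦ w u / f u) volume p q := by
  rw [← uIcc_of_le hpq] at hI
  simpa [div_eq_inv_mul] using
    hw.continuousOn_mul ((hf.mono hI).inv₀ fun u hu ↦ (hfpos u (hI hu)).ne')

lemma integral_sqrt_le_timeSep (hf : ContinuousOn f I) (hfpos : ∀ t ∈ I, 0 < f t)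
    {w : ℝ → ℝ} {p q d : ℝ} (hpq : p < q) (hI : Icc p q ⊆ I)
    (hw : IntervalIntegrable w volume p q) (hw₁ : ∀ u ∈ Icc p q, |w u| ≤ 1) (hd : 0 ≤ d)
    (hdw : d ≤ ∫ u in p..q, w u / f u) :
    ∫ u in p..q, √(1 - w u ^ 2) ≤ timeSep I f (p, 0) (q, d) := by
  -- `F` extends `f|[p, q]` continuously to `ℝ`: the graph of `∫ v / F` is then differentiable
  -- also at the endpoints `p` and `q`
  set F := fun u ↦ f (projIcc p q hpq.le u)
  have hFc : Continuous F := (hf.mono hI).comp_continuous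
    (continuous_subtype_val.comp continuous_projIcc) fun u ↦ (projIcc p q hpq.le u).2
  have hFpos : ∀ u, 0 < F u := fun u ↦ hfpos _ (hI (projIcc p q hpq.le u).2)
  have hF : ∀ u ∈ Icc p q, F u = f u := fun u hu ↦ by simp [F, projIcc_of_mem hpq.le hu]
  have hc : Continuous fun u ↦ (F u)⁻¹ := hFc.inv₀ fun u ↦ (hFpos u).ne'
  refine le_of_forall_pos_le_add fun ε hε ↦ ?_
  obtain ⟨v, hv, hv₁, hdisp, hlen⟩ :=
    exists_continuous_slope_approx hc hpq.le (fun u _ ↦ inv_pos.2 (hFpos u)) hw hw₁ hε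
  have hdisp' : ∫ u in p..q, w u / f u = ∫ u in p..q, (F u)⁻¹ * w u :=
    intervalIntegral.integral_congr fun u hu ↦ by
      rw [uIcc_of_le hpq.le] at hu
      rw [hF u hu, div_eq_inv_mul]
  have hlen' : ∫ u in p..q, √(1 - v u ^ 2) = ∫ u in p..q, √(1 - f u ^ 2 * ((F u)⁻¹ * v u) ^ 2) :=
    intervalIntegral.integral_congr fun u hu ↦ by
      rw [uIcc_of_le hpq.le] at hu
      have := (hFpos u).ne'
      rw [← hF u hu]
      field_simp
  have hcv : Continuous fun u ↦ (F u)⁻¹ * v u := hc.mul hv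
  have hsep := integral_sqrt_le_timeSep_of_continuous (hf.mono hI) hcv hpq hI (fun u hu ↦ ?_) hd
    (hdw.trans (hdisp' ▸ hdisp))
  · linarith
  · have := (hFpos u).ne'
    rw [← hF u hu, mul_pow, inv_pow, ← mul_assoc, mul_inv_cancel₀ (pow_ne_zero 2 this), one_mul]
    exact (sq_le_one_iff_abs_le_one _).2 (hv₁ u)

lemma lorLength_add_lorLength_le_timeSep (hf : ContinuousOn f I) (hfpos : ∀ t ∈ I, 0 < f t)
    {a₁ b₁ a₂ b₂ : ℝ} {α₁ β₁ α₂ β₂ : ℝ → ℝ} (h₁ : IsCausalCurve I f a₁ b₁ α₁ β₁)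
    (h₂ : IsCausalCurve I f a₂ b₂ α₂ β₂) (h₁₂ : α₁ b₁ = α₂ a₂) {d : ℝ} (hd : 0 ≤ d)
    (hd₁₂ : d ≤ (β₁ b₁ - β₁ a₁) + (β₂ b₂ - β₂ a₂)) :
    lorLength f a₁ b₁ α₁ β₁ + lorLength f a₂ b₂ α₂ β₂ ≤ timeSep I f (α₁ a₁, 0) (α₂ b₂, d) := by
  obtain ⟨w₁, hw₁, hw₁₁, hdisp₁, hlen₁⟩ := h₁.exists_slope hf hfpos
  obtain ⟨w₂, hw₂, hw₂₁, hdisp₂, hlen₂⟩ := h₂.exists_slope hf hfpos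
  have hI₁ := h₁.Icc_subset
  have hI₂ := h₂.Icc_subset
  have hr := h₁.fst_lt_fst
  have ht := h₂.fst_lt_fst
  set r := α₁ a₁
  set s := α₁ b₁
  set t := α₂ b₂
  rw [← h₁₂] at hw₂ hw₂₁ hdisp₂ hlen₂ hI₂ ht
  have hrt : Icc r t ⊆ I := Icc_union_Icc_eq_Icc hr.le ht.le ▸ union_subset hI₁ hI₂
  have hdisp : ∫ u in r..t, (if u ≤ s then w₁ u else w₂ u) / f u =
      (β₁ b₁ - β₁ a₁) + (β₂ b₂ - β₂ a₂) := by
    simp only [ite_div]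
    rw [integral_ite_le hr.le ht.le (hw₁.div_of_Icc_subset hf hfpos hr.le hI₁)
      (hw₂.div_of_Icc_subset hf hfpos ht.le hI₂), hdisp₁, hdisp₂]
  have hlen : ∫ u in r..t, √(1 - (if u ≤ s then w₁ u else w₂ u) ^ 2) =
      lorLength f a₁ b₁ α₁ β₁ + lorLength f a₂ b₂ α₂ β₂ := by
    simp only [apply_ite (fun x : ℝ ↦ √(1 - x ^ 2))]
    rw [integral_ite_le hr.le ht.le hw₁.sqrt_one_sub_sq hw₂.sqrt_one_sub_sq, hlen₁, hlen₂]
  rw [← hlen]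
  refine integral_sqrt_le_timeSep hf hfpos (hr.trans ht) hrt (hw₁.ite_le hr.le ht.le hw₂)
    (fun u hu ↦ ?_) hd (hdisp ▸ hd₁₂)
  by_cases hus : u ≤ s
  · simpa [hus] using hw₁₁ u ⟨hu.1, hus⟩
  · simpa [hus] using hw₂₁ u ⟨(not_le.1 hus).le, hu.2⟩

end Concatenation

theorem wp_reverse_triangle_general
    (I : Set ℝ)
    (f : ℝ → ℝ) (hf : ContinuousOn f I) (hfpos : ∀ t ∈ I, 0 < f t)
    {Y : Type*} [MetricSpace Y] (r s t : ℝ) (x y z : Y)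
    (h₁ : wpCausal I f (r, x) (s, y)) (h₂ : wpCausal I f (s, y) (t, z)) :
    wpTau I f (r, x) (s, y) + wpTau I f (s, y) (t, z) ≤ wpTau I f (r, x) (t, z) := by
  simp only [wpCausal, causalRel, wpTau] at h₁ h₂ ⊢
  rcases h₁ with h₁ | ⟨a₁, b₁, α₁, β₁, hc₁, hr₁, hx₁, hs₁, hy₁⟩
  · obtain ⟨rfl, hxy⟩ := Prod.mk.inj h₁
    rw [dist_eq_zero.1 hxy.symm, dist_self, timeSep_of_le le_rfl, zero_add]
  rcases h₂ with h₂ | ⟨a₂, b₂, α₂, β₂, hc₂, hs₂, hy₂, ht₂, hz₂⟩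
  · obtain ⟨rfl, hyz⟩ := Prod.mk.inj h₂
    rw [dist_eq_zero.1 hyz.symm, dist_self, timeSep_of_le le_rfl, add_zero]
  refine timeSep_add_timeSep_le ⟨_, a₁, b₁, α₁, β₁, hc₁, hr₁, hx₁, hs₁, hy₁, rfl⟩
    ⟨_, a₂, b₂, α₂, β₂, hc₂, hs₂, hy₂, ht₂, hz₂, rfl⟩ ?_
  rintro _ ⟨a, b, α, β, hc, hr, hx, hs, hy, rfl⟩ _ ⟨a', b', α', β', hc', hs', hy', ht', hz', rfl⟩
  have := lorLength_add_lorLength_le_timeSep hf hfpos hc hc' (hs.trans hs'.symm) dist_nonneg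
    (d := dist x z) (by simpa [hx, hy, hy', hz'] using dist_triangle x y z)
  simpa [hr, ht'] using this

/-- The reverse triangle inequality in the Lorentzian warped product `I ×_f Y`:
if `(r,x) ≤ (s,y) ≤ (t,z)` then `τ((r,x),(s,y)) + τ((s,y),(t,z)) ≤ τ((r,x),(t,z))`. -/
theorem wp_reverse_triangle
    (I : Set ℝ) (hIc : I.OrdConnected)
    (f : ℝ → ℝ) (hf : ContinuousOn f I) (hfpos : ∀ t ∈ I, 0 < f t)
    {Y : Type*} [MetricSpace Y] (r s t : ℝ) (x y z : Y)
    (h₁ : wpCausal I f (r, x) (s, y)) (h₂ : wpCausal I f (s, y) (t, z)) :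
    wpTau I f (r, x) (s, y) + wpTau I f (s, y) (t, z) ≤ wpTau I f (r, x) (t, z) :=
  wp_reverse_triangle_general I f hf hfpos r s t x y z h₁ h₂
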